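/- The family of Poisson algebras {P₃,₄^α : α ∈ ℂ} degenerates to the Poisson algebra P₃,₃: there exist a map f : ℂ∖{0} → ℂ and a family g(t), t ∈ ℂ∖{0}, of invertible linear maps of ℂ³ such that for all x, y ∈ ℂ³, g(t)(μ'_{f(t)}(g(t)⁻¹x, g(t)⁻¹y)) → λ'(x,y) as t → 0 (in the standard topology of ℂ³), where μ'_α denotes the bracket of P₃,₄^α and λ' denotes the bracket of P₃,₃ (all these algebras have zero associative multiplication). -/

import Mathlib

open scoped BigOperators

/-- The bilinear map on `Fin n → ℂ` determined by structure constants `c`. -/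
noncomputable def sb {n : ℕ} (c : Fin n → Fin n → Fin n → ℂ) :
    (Fin n → ℂ) →ₗ[ℂ] (Fin n → ℂ) →ₗ[ℂ] (Fin n → ℂ) :=
  LinearMap.mk₂ ℂ (fun x y k => ∑ a, ∑ b, c a b k * (x a * y b))
    (fun x x' y => by
      funext k
      simp [add_mul, mul_add, Finset.sum_add_distrib])
    (fun r x y => by
      funext k
      simp only [Pi.smul_apply, smul_eq_mul, Finset.mul_sum]
      exact Finset.sum_congr rfl fun a _ => Finset.sum_congr rfl fun b _ => by ring)
    (fun x y y' => by
      funext k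
      simp [mul_add, Finset.sum_add_distrib])
    (fun r x y => by
      funext k
      simp only [Pi.smul_apply, smul_eq_mul, Finset.mul_sum]
      exact Finset.sum_congr rfl fun a _ => Finset.sum_congr rfl fun b _ => by ring)

/-- Structure constants of the bracket of `P₃,₄^α`: `{e₁,e₂}=e₂`, `{e₁,e₃}=α e₃`. -/
def cb4 (α : ℂ) : Fin 3 → Fin 3 → Fin 3 → ℂ :=
  ![![![0,0,0],![0,1,0],![0,0,α]], ![![0,-1,0],![0,0,0],![0,0,0]], ![![0,0,-α],![0,0,0],![0,0,0]]]

/-- Structure constants of the bracket of `P₃,₃`: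
`{e₁,e₂}=e₂`, `{e₁,e₃}=e₂+e₃`. -/
def cb3 : Fin 3 → Fin 3 → Fin 3 → ℂ :=
  ![![![0,0,0],![0,1,0],![0,1,1]], ![![0,-1,0],![0,0,0],![0,0,0]], ![![0,-1,-1],![0,0,0],![0,0,0]]]

open Filter Topology

def shear {R : Type*} [CommRing R] {n : ℕ} {i j : Fin n} (hij : i ≠ j) (s : R) :
    (Fin n → R) ≃ₗ[R] (Fin n → R) :=
  LinearEquiv.transvection (f := LinearMap.proj j) (v := Pi.single i s) (by simp [hij.symm])

section shear

variable {R : Type*} [CommRing R] {n : ℕ} {i j : Fin n} (hij : i ≠ j) (s : R) (x : Fin n → R)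

lemma shear_apply : shear hij s x = x + x j • Pi.single i s := rfl

lemma shear_symm_apply : (shear hij s).symm x = x - x j • Pi.single i s := by
  rw [shear, LinearEquiv.transvection.symm_eq _ (by simp [hij.symm]),
    LinearEquiv.transvection.apply, smul_neg, ← sub_eq_add_neg]
  rfl

end shear

lemma sb_cb4_apply (α : ℂ) (x y : Fin 3 → ℂ) :
    sb (cb4 α) x y = ![0, x 0 * y 1 - x 1 * y 0, α * (x 0 * y 2 - x 2 * y 0)] := by
  ext k
  fin_cases k <;> simp [sb, cb4, Fin.sum_univ_three] <;> ring

lemma sb_cb3_apply (x y : Fin 3 → ℂ) :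
    sb cb3 x y = ![0, x 0 * y 1 - x 1 * y 0 + (x 0 * y 2 - x 2 * y 0), x 0 * y 2 - x 2 * y 0] := by
  ext k
  fin_cases k <;> simp [sb, cb3, Fin.sum_univ_three] <;> ring

/-- In the basis `e₁, e₂, e₃ - t⁻¹ e₂` of `P₃,₄^(1+t)` the bracket reads
`{E₁,E₂} = E₂`, `{E₁,E₃} = E₂ + (1+t) E₃`. -/
noncomputable def degenerationShear (t : ℂ) : (Fin 3 → ℂ) ≃ₗ[ℂ] (Fin 3 → ℂ) :=
  shear (i := 1) (j := 2) (by decide) t⁻¹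

lemma degenerationShear_conj_sb_cb4 {t : ℂ} (ht : t ≠ 0) (x y : Fin 3 → ℂ) :
    degenerationShear t
        (sb (cb4 (1 + t)) ((degenerationShear t).symm x) ((degenerationShear t).symm y)) =
      sb cb3 x y + t • Pi.single 2 (x 0 * y 2 - x 2 * y 0) := by
  simp only [degenerationShear, shear_apply, shear_symm_apply, sb_cb4_apply, sb_cb3_apply]
  ext k
  fin_cases k <;> simp <;> field_simp; ring

/-- The family of Poisson algebras `{P₃,₄^α : α ∈ ℂ}` degenerates to `P₃,₃`
(all these algebras have zero associative multiplication). -/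
theorem stmt19 :
    ∃ (f : ℂ → ℂ) (g : ℂ → ((Fin 3 → ℂ) ≃ₗ[ℂ] (Fin 3 → ℂ))), ∀ x y : Fin 3 → ℂ,
      Filter.Tendsto (fun t : ℂ => g t (sb (cb4 (f t)) ((g t).symm x) ((g t).symm y)))
        (nhdsWithin (0 : ℂ) {(0 : ℂ)}ᶜ) (nhds (sb cb3 x y)) := by
  refine ⟨fun t => 1 + t, degenerationShear, fun x y => ?_⟩
  set v : Fin 3 → ℂ := Pi.single 2 (x 0 * y 2 - x 2 * y 0)
  have hlim : Tendsto (fun t : ℂ => sb cb3 x y + t • v) (𝓝[≠] 0) (𝓝 (sb cb3 x y)) := by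
    have := tendsto_const_nhds (x := sb cb3 x y) |>.add (tendsto_id (x := 𝓝 (0 : ℂ)) |>.smul_const v)
    simpa using this.mono_left nhdsWithin_le_nhds
  refine hlim.congr' ?_
  filter_upwards [self_mem_nhdsWithin] with t ht
  exact (degenerationShear_conj_sb_cb4 ht x y).symm
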